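/- Let φ : [0,∞) → [0,∞) be an N-function of class C¹([0,∞)) ∩ C²((0,∞)) with φ(0) = 0, φ'(0) = 0, φ' increasing and positive on (0,∞), satisfying p ≤ s·φ''(s)/φ'(s) + 1 ≤ q for all s > 0, where 1 < p ≤ q, and assume φ(s) → ∞ as s → ∞ so that φ has an inverse φ^{-1} on [0,∞). Then there exists c = c(p,q) > 0 such that for every measurable set U ⊂ ℝ^m with 0 < |U| < ∞ and every measurable f : U → [0,∞) with ∫_U φ(f) dz < ∞: ⨍_U φ'(f) dz ≤ c · φ'( φ^{-1}( ⨍_U φ(f) dz ) ). -/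

import Mathlib

/-!
Put `a = φ⁻¹(⨍ φ(f))`. Monotonicity of `φ'` for `t ≤ a`, and the upper index bound
`t φ'(t) ≤ q φ(t)` for `t ≥ a`, give the pointwise estimate `φ'(t) ≤ φ'(a) + (q / a) φ(t)`.
Averaging it and using `φ(a) ≤ a φ'(a)` (convexity) yields the claim with `c = 1 + q`.
-/

open MeasureTheory Real Set Filter
open scoped InnerProductSpace

/-- An N-function `φ` of class `C¹([0,∞)) ∩ C²((0,∞))` with (right) derivative `φ'`
and second derivative `φ''` on `(0,∞)`, satisfying `φ(0) = 0`, `φ'(0) = 0`, `φ'`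
increasing and positive on `(0,∞)`, and the index condition
`p ≤ s·φ''(s)/φ'(s) + 1 ≤ q` for all `s > 0`. -/
structure IsNFun (φ φ' φ'' : ℝ → ℝ) (p q : ℝ) : Prop where
  map_zero : φ 0 = 0
  nonneg : ∀ s : ℝ, 0 ≤ s → 0 ≤ φ s
  hasDeriv : ∀ s ∈ Set.Ici (0:ℝ), HasDerivWithinAt φ (φ' s) (Set.Ici 0) s
  derivCont : ContinuousOn φ' (Set.Ici 0)
  hasDeriv2 : ∀ s ∈ Set.Ioi (0:ℝ), HasDerivWithinAt φ' (φ'' s) (Set.Ioi 0) s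
  deriv2Cont : ContinuousOn φ'' (Set.Ioi 0)
  deriv_zero : φ' 0 = 0
  deriv_mono : MonotoneOn φ' (Set.Ici 0)
  deriv_pos : ∀ s : ℝ, 0 < s → 0 < φ' s
  idx_low : ∀ s : ℝ, 0 < s → p ≤ s * φ'' s / φ' s + 1
  idx_high : ∀ s : ℝ, 0 < s → s * φ'' s / φ' s + 1 ≤ q

/-- The shifted N-function `φ_σ(s) = ∫₀^s φ'(σ+t)·t/(σ+t) dt`, expressed through the
derivative `φ'` of `φ`. -/
noncomputable def shifted (φ' : ℝ → ℝ) (σ s : ℝ) : ℝ :=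
  ∫ t in (0:ℝ)..s, φ' (σ + t) * t / (σ + t)


open scoped Topology

namespace IsNFun

variable {φ φ' φ'' : ℝ → ℝ} {p q : ℝ}

lemma hasDerivAt (h : IsNFun φ φ' φ'' p q) {s : ℝ} (hs : 0 < s) : HasDerivAt φ (φ' s) s :=
  (h.hasDeriv s hs.le).hasDerivAt (Ici_mem_nhds hs)

lemma hasDerivAt_deriv (h : IsNFun φ φ' φ'' p q) {s : ℝ} (hs : 0 < s) :
    HasDerivAt φ' (φ'' s) s :=
  (h.hasDeriv2 s hs).hasDerivAt (Ioi_mem_nhds hs)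

lemma continuousOn (h : IsNFun φ φ' φ'' p q) : ContinuousOn φ (Ici 0) :=
  fun s hs => (h.hasDeriv s hs).continuousWithinAt

lemma deriv_nonneg (h : IsNFun φ φ' φ'' p q) {s : ℝ} (hs : 0 ≤ s) : 0 ≤ φ' s :=
  h.deriv_zero ▸ h.deriv_mono self_mem_Ici hs hs

lemma mul_deriv2_le (h : IsNFun φ φ' φ'' p q) {s : ℝ} (hs : 0 < s) :
    s * φ'' s ≤ (q - 1) * φ' s := by
  have hidx := h.idx_high s hs
  rw [div_add' _ _ _ (h.deriv_pos s hs).ne', div_le_iff₀ (h.deriv_pos s hs)] at hidx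
  linarith

/-- By the mean value theorem, `φ(s) = s φ'(ξ)` for some `ξ ∈ (0, s)`, and `φ'` is monotone. -/
lemma le_mul_deriv (h : IsNFun φ φ' φ'' p q) {s : ℝ} (hs : 0 ≤ s) : φ s ≤ s * φ' s := by
  rcases hs.eq_or_lt with rfl | hs
  · simp [h.map_zero]
  obtain ⟨ξ, hξ, hslope⟩ := exists_hasDerivAt_eq_slope φ φ' hs
    (h.continuousOn.mono Icc_subset_Ici_self) fun x hx => h.hasDerivAt hx.1
  rw [h.map_zero, sub_zero, sub_zero, eq_div_iff hs.ne'] at hslope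
  rw [← hslope, mul_comm]
  exact mul_le_mul_of_nonneg_left (h.deriv_mono (le_of_lt hξ.1) hs.le hξ.2.le) hs.le

/-- `s ↦ q φ(s) - s φ'(s)` vanishes at `0` and has derivative `(q - 1) φ' - s φ'' ≥ 0`. -/
lemma mul_deriv_le (h : IsNFun φ φ' φ'' p q) {s : ℝ} (hs : 0 ≤ s) : s * φ' s ≤ q * φ s := by
  rcases hs.eq_or_lt with rfl | hs
  · simp [h.map_zero]
  have hderiv : ∀ x ∈ Ioo 0 s, HasDerivAt (fun x => q * φ x - x * φ' x)
      (q * φ' x - (1 * φ' x + x * φ'' x)) x := fun x hx =>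
    ((h.hasDerivAt hx.1).const_mul q).sub ((hasDerivAt_id x).mul (h.hasDerivAt_deriv hx.1))
  have hcont : ContinuousOn (fun x => q * φ x - x * φ' x) (Icc 0 s) :=
    ((h.continuousOn.mono Icc_subset_Ici_self).const_smul q).sub
      (continuousOn_id.mul (h.derivCont.mono Icc_subset_Ici_self))
  obtain ⟨ξ, hξ, hslope⟩ := exists_hasDerivAt_eq_slope _ _ hs hcont hderiv
  simp only [h.map_zero, h.deriv_zero, mul_zero, sub_zero] at hslope
  rw [eq_div_iff hs.ne'] at hslope
  have hderiv_nonneg : 0 ≤ q * φ' ξ - (1 * φ' ξ + ξ * φ'' ξ) := by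
    linarith [h.mul_deriv2_le hξ.1]
  linarith [mul_nonneg hderiv_nonneg hs.le]

lemma q_pos (h : IsNFun φ φ' φ'' p q) : 0 < q := by
  have hφ1 : 0 < q * φ 1 :=
    (h.deriv_pos 1 one_pos).trans_le (one_mul (φ' 1) ▸ h.mul_deriv_le zero_le_one)
  exact pos_of_mul_pos_left hφ1 (h.nonneg 1 zero_le_one)

lemma deriv_le_add_div_mul (h : IsNFun φ φ' φ'' p q) {a t : ℝ} (ha : 0 < a) (ht : 0 ≤ t) :
    φ' t ≤ φ' a + q / a * φ t := by
  rcases le_total t a with hta | hat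
  · have : 0 ≤ q / a * φ t := mul_nonneg (div_nonneg h.q_pos.le ha.le) (h.nonneg t ht)
    linarith [h.deriv_mono ht ha.le hta]
  · have hat' : a * φ' t ≤ q * φ t :=
      (mul_le_mul_of_nonneg_right hat (h.deriv_nonneg ht)).trans (h.mul_deriv_le ht)
    have : φ' t ≤ q / a * φ t := by
      rwa [div_mul_eq_mul_div, le_div_iff₀ ha, mul_comm]
    linarith [h.deriv_nonneg ha.le]

variable {α : Type*} [MeasurableSpace α] {μ : Measure α} {g : α → ℝ}

lemma integral_deriv_comp_le [IsProbabilityMeasure μ] (h : IsNFun φ φ' φ'' p q)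
    (hg : ∀ x, 0 ≤ g x) (hint : Integrable (fun x => φ (g x)) μ) {a : ℝ} (ha : 0 < a) :
    ∫ x, φ' (g x) ∂μ ≤ φ' a + q / a * ∫ x, φ (g x) ∂μ :=
  calc ∫ x, φ' (g x) ∂μ ≤ ∫ x, (φ' a + q / a * φ (g x)) ∂μ :=
        integral_mono_of_nonneg (.of_forall fun x => h.deriv_nonneg (hg x))
          ((integrable_const _).add (hint.const_mul _))
          (.of_forall fun x => h.deriv_le_add_div_mul ha (hg x))
    _ = φ' a + q / a * ∫ x, φ (g x) ∂μ := by
        rw [integral_add (integrable_const _) (hint.const_mul _), integral_const,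
          integral_const_mul, probReal_univ, one_smul]

/-- For `a > 0` combine `integral_deriv_comp_le` with `φ(a) ≤ a φ'(a)`; for `a = 0` let
`a → 0⁺` in `integral_deriv_comp_le`. -/
lemma integral_deriv_comp_le_of_eq [IsProbabilityMeasure μ] (h : IsNFun φ φ' φ'' p q)
    (hg : ∀ x, 0 ≤ g x) (hint : Integrable (fun x => φ (g x)) μ) {a : ℝ} (ha : 0 ≤ a)
    (haM : φ a = ∫ x, φ (g x) ∂μ) :
    ∫ x, φ' (g x) ∂μ ≤ (1 + q) * φ' a := by
  rcases ha.eq_or_lt with rfl | ha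
  · have hM : ∫ x, φ (g x) ∂μ = 0 := by rw [← haM, h.map_zero]
    have hlim := ((h.derivCont 0 self_mem_Ici).mono Ioi_subset_Ici_self).tendsto
    rw [h.deriv_zero] at hlim
    rw [h.deriv_zero, mul_zero]
    refine ge_of_tendsto hlim ?_
    filter_upwards [self_mem_nhdsWithin] with b hb
    simpa [hM] using h.integral_deriv_comp_le hg hint hb
  · have hφa : q / a * φ a ≤ q * φ' a := by
      rw [div_mul_eq_mul_div, div_le_iff₀ ha, mul_assoc]
      exact mul_le_mul_of_nonneg_left (mul_comm (φ' a) a ▸ h.le_mul_deriv ha.le) h.q_pos.le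
    calc ∫ x, φ' (g x) ∂μ ≤ φ' a + q / a * φ a := haM ▸ h.integral_deriv_comp_le hg hint ha
      _ ≤ (1 + q) * φ' a := by linarith

lemma average_deriv_comp_le_of_eq [IsFiniteMeasure μ] [NeZero μ]
    (h : IsNFun φ φ' φ'' p q) (hg : ∀ x, 0 ≤ g x) (hint : Integrable (fun x => φ (g x)) μ)
    {a : ℝ} (ha : 0 ≤ a) (haM : φ a = ⨍ x, φ (g x) ∂μ) :
    ⨍ x, φ' (g x) ∂μ ≤ (1 + q) * φ' a := by
  rw [average_eq'] at haM ⊢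
  exact h.integral_deriv_comp_le_of_eq hg hint.to_average ha haM

end IsNFun

theorem mean_deriv_jensen_general (m : ℕ) (p q : ℝ) (φ φ' φ'' φinv : ℝ → ℝ)
    (h : IsNFun φ φ' φ'' p q)
    (hinv_right : ∀ t : ℝ, 0 ≤ t → φ (φinv t) = t ∧ 0 ≤ φinv t) :
    ∃ c : ℝ, 0 < c ∧ ∀ U : Set (EuclideanSpace ℝ (Fin m)), MeasurableSet U →
      0 < volume U → volume U < ⊤ →
      ∀ f : EuclideanSpace ℝ (Fin m) → ℝ, (∀ z, 0 ≤ f z) →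
        AEStronglyMeasurable f (volume.restrict U) →
        IntegrableOn (fun z => φ (f z)) U →
        ⨍ z in U, φ' (f z) ≤ c * φ' (φinv (⨍ z in U, φ (f z))) := by
  refine ⟨1 + q, by linarith [h.q_pos], fun U _ hU0 hUtop f hf _ hint => ?_⟩
  have : IsFiniteMeasure (volume.restrict U) := isFiniteMeasure_restrict.mpr hUtop.ne
  have : NeZero (volume.restrict U) := ⟨by simpa [Measure.restrict_eq_zero] using hU0.ne'⟩
  have hM : 0 ≤ ⨍ z in U, φ (f z) := by
    rw [average_eq']
    exact integral_nonneg fun z => h.nonneg _ (hf z)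
  obtain ⟨hφinv, hφinv_nonneg⟩ := hinv_right _ hM
  exact h.average_deriv_comp_le_of_eq hf hint hφinv_nonneg hφinv

/-- **Jensen-type estimate for `φ'`.** For an N-function `φ` with index condition
(`1 < p ≤ q`) and `φ(s) → ∞`, with inverse `φ⁻¹`, there is `c = c(p,q)` such that
`⨍_U φ'(f) ≤ c·φ'(φ⁻¹(⨍_U φ(f)))` for all `U` of positive finite measure and all
measurable `f ≥ 0` with `∫_U φ(f) < ∞`. -/
theorem mean_deriv_jensen (m : ℕ) (p q : ℝ) (φ φ' φ'' φinv : ℝ → ℝ)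
    (hp : 1 < p) (hpq : p ≤ q) (h : IsNFun φ φ' φ'' p q)
    (htop : Tendsto φ atTop atTop)
    (hinv_left : ∀ s : ℝ, 0 ≤ s → φinv (φ s) = s)
    (hinv_right : ∀ t : ℝ, 0 ≤ t → φ (φinv t) = t ∧ 0 ≤ φinv t) :
    ∃ c : ℝ, 0 < c ∧ ∀ U : Set (EuclideanSpace ℝ (Fin m)), MeasurableSet U →
      0 < volume U → volume U < ⊤ →
      ∀ f : EuclideanSpace ℝ (Fin m) → ℝ, (∀ z, 0 ≤ f z) →
        AEStronglyMeasurable f (volume.restrict U) →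
        IntegrableOn (fun z => φ (f z)) U →
        ⨍ z in U, φ' (f z) ≤ c * φ' (φinv (⨍ z in U, φ (f z))) :=
  mean_deriv_jensen_general m p q φ φ' φ'' φinv h hinv_right
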